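/- Let N be a tree-child network on X, and let e = (u,v) be a reticulation edge of N. Then the network obtained from N by deleting e and suppressing u and v is a tree-child network on X. -/

import Mathlib

/-!
Common definitions: rooted binary phylogenetic networks as directed acyclic
multigraphs (parallel edges allowed), tree-child networks, leaf-labelled
acyclic digraphs, phylogenetic digraphs, embeddings, extensions, root
extensions, cut sizes, SNPR operations, SNPR sequences, and the associated
distances `dtc`, `mtc`, `drspr`.
-/

open Relation

/-- A directed multigraph on vertex type `V`: a finite vertex set together with
a multiset of directed edges (so parallel edges are allowed). -/
structure MDigraph (V : Type) where
  verts : Finset V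
  edges : Multiset (V × V)

namespace MDigraph

variable {V : Type} [DecidableEq V]

/-- In-degree of a vertex (counting multiplicities). -/
def inDeg (G : MDigraph V) (v : V) : ℕ :=
  (G.edges.filter fun e => e.2 = v).card

/-- Out-degree of a vertex (counting multiplicities). -/
def outDeg (G : MDigraph V) (v : V) : ℕ :=
  (G.edges.filter fun e => e.1 = v).card

/-- `u` is a parent of `v`. -/
def Adj (G : MDigraph V) (u v : V) : Prop := (u, v) ∈ G.edges

/-- Directed reachability. -/
def Reach (G : MDigraph V) : V → V → Prop := Relation.ReflTransGen G.Adj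

/-- The digraph has no directed cycle. -/
def Acyclic (G : MDigraph V) : Prop := ∀ u v, G.Adj u v → ¬ G.Reach v u

/-- Underlying undirected adjacency. -/
def UAdj (G : MDigraph V) (u v : V) : Prop := G.Adj u v ∨ G.Adj v u

/-- The underlying undirected graph is connected. -/
def Connected (G : MDigraph V) : Prop :=
  ∀ u ∈ G.verts, ∀ v ∈ G.verts, Relation.ReflTransGen G.UAdj u v

/-- Edge endpoints lie in the vertex set. -/
def WellFormed (G : MDigraph V) : Prop :=
  ∀ e ∈ G.edges, e.1 ∈ G.verts ∧ e.2 ∈ G.verts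

/-- A leaf: a vertex of out-degree zero. -/
def IsLeafV (G : MDigraph V) (v : V) : Prop := v ∈ G.verts ∧ G.outDeg v = 0

/-- A tree vertex: in-degree one and out-degree one or two. -/
def IsTreeVert (G : MDigraph V) (v : V) : Prop :=
  v ∈ G.verts ∧ G.inDeg v = 1 ∧ (G.outDeg v = 1 ∨ G.outDeg v = 2)

/-- A reticulation: in-degree two and out-degree one. -/
def IsRetic (G : MDigraph V) (v : V) : Prop :=
  v ∈ G.verts ∧ G.inDeg v = 2 ∧ G.outDeg v = 1

/-- A reticulation edge: an edge whose head is a reticulation. -/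
def IsReticEdge (G : MDigraph V) (e : V × V) : Prop :=
  e ∈ G.edges ∧ G.IsRetic e.2

/-- A tree edge: an edge whose head is not a reticulation. -/
def IsTreeEdge (G : MDigraph V) (e : V × V) : Prop :=
  e ∈ G.edges ∧ ¬ G.IsRetic e.2

end MDigraph

variable {V : Type} [DecidableEq V]

/-- `G` is a rooted binary phylogenetic network on `X` with root `ρ`. -/
structure IsPhyloNetwork (G : MDigraph V) (X : Finset V) (ρ : V) : Prop where
  wf : G.WellFormed
  conn : G.Connected
  acyc : G.Acyclic
  X_nonempty : X.Nonempty
  X_sub : X ⊆ G.verts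
  root_mem : ρ ∈ G.verts
  root_inDeg : G.inDeg ρ = 0
  root_outDeg : G.outDeg ρ = 1
  root_unique : ∀ v ∈ G.verts, G.inDeg v = 0 → v = ρ
  leaf_iff : ∀ v ∈ G.verts, (G.outDeg v = 0 ↔ v ∈ X)
  leaf_inDeg : ∀ v ∈ G.verts, G.outDeg v = 0 → G.inDeg v = 1
  internal : ∀ v ∈ G.verts, v ≠ ρ → G.outDeg v ≠ 0 →
    (G.inDeg v = 1 ∧ G.outDeg v = 2) ∨ (G.inDeg v = 2 ∧ G.outDeg v = 1)

/-- Every non-leaf vertex has a child that is a tree vertex or a leaf. -/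
def IsTreeChildG (G : MDigraph V) : Prop :=
  ∀ v ∈ G.verts, G.outDeg v ≠ 0 → ∃ w, G.Adj v w ∧ (G.IsTreeVert w ∨ G.IsLeafV w)

/-- A tree-child network on `X` with root `ρ`. -/
def IsTCNetwork (G : MDigraph V) (X : Finset V) (ρ : V) : Prop :=
  IsPhyloNetwork G X ρ ∧ IsTreeChildG G

/-- Two reticulations joined by an edge. -/
def HasStack (G : MDigraph V) : Prop :=
  ∃ u v, G.IsRetic u ∧ G.IsRetic v ∧ G.Adj u v

/-- Two (distinct) reticulations with a common parent. -/
def HasSiblingRetics (G : MDigraph V) : Prop :=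
  ∃ p u v, u ≠ v ∧ G.IsRetic u ∧ G.IsRetic v ∧ G.Adj p u ∧ G.Adj p v

/-- A pair of parallel edges. -/
def HasParallel (G : MDigraph V) : Prop :=
  ∃ e : V × V, 1 < G.edges.count e

/-- Delete (one copy of) an edge. -/
def deleteEdge (G : MDigraph V) (e : V × V) : MDigraph V :=
  ⟨G.verts, G.edges.erase e⟩

/-- Add the edge `(u, v)` together with the new vertex `u`. -/
def addEdgeFrom (G : MDigraph V) (u v : V) : MDigraph V :=
  ⟨insert u G.verts, (u, v) ::ₘ G.edges⟩

/-- `G'` is obtained from `G` by suppressing the vertex `w` of in-degree one and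
out-degree one, replacing its two incident edges by a single edge from its
parent to its child. -/
def SuppressAt (G G' : MDigraph V) (w : V) : Prop :=
  ∃ p c, G.Adj p w ∧ G.Adj w c ∧ G.inDeg w = 1 ∧ G.outDeg w = 1 ∧
    G'.verts = G.verts.erase w ∧
    G'.edges = (p, c) ::ₘ ((G.edges.erase (p, w)).erase (w, c))

/-- One suppression step. -/
def SuppressStep (G G' : MDigraph V) : Prop := ∃ w, SuppressAt G G' w

/-- `G'` is obtained from `G` by subdividing the edge `e` with the new vertex `w`. -/
def SubdivAt (G G' : MDigraph V) (e : V × V) (w : V) : Prop :=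
  e ∈ G.edges ∧ w ∉ G.verts ∧ G'.verts = insert w G.verts ∧
    G'.edges = (e.1, w) ::ₘ (w, e.2) ::ₘ G.edges.erase e

/-- `G` and `H` are isomorphic via an isomorphism fixing every element of `S`. -/
def IsoFixing (G H : MDigraph V) (S : Finset V) : Prop :=
  ∃ φ : V ≃ V, (∀ x ∈ S, φ x = x) ∧ G.verts.image φ = H.verts ∧
    G.edges.map (fun e => (φ e.1, φ e.2)) = H.edges

/-- `D` is a leaf-labelled acyclic digraph on `Y` (relative to the root label `ρ`). -/
def IsLLAD (D : MDigraph V) (Y : Finset V) (ρ : V) : Prop :=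
  D.WellFormed ∧ D.Connected ∧ D.Acyclic ∧
    ((Y = ∅ ∧ D.verts = {ρ} ∧ D.edges = 0) ∨
     (∃ y, Y = {y} ∧ D.verts = {y} ∧ D.edges = 0) ∨
     (Y.Nonempty ∧ Y ⊆ D.verts ∧
       (∀ v ∈ D.verts, D.inDeg v = 0 → D.outDeg v = 1 → v = ρ) ∧
       (∀ y ∈ Y, D.inDeg y = 1 ∧ D.outDeg y = 0) ∧
       (∀ v ∈ D.verts, D.outDeg v = 0 → v ∈ Y) ∧
       (∀ v ∈ D.verts, v ∉ Y → ¬(D.inDeg v = 0 ∧ D.outDeg v = 1) →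
         (D.inDeg v = 0 ∧ D.outDeg v = 2) ∨ (D.inDeg v = 1 ∧ D.outDeg v = 2) ∨
           (D.inDeg v = 2 ∧ D.outDeg v = 1))))

/-- `M` is a subgraph of `N` (edges counted with multiplicity). -/
def IsSubgraph (M N : MDigraph V) : Prop :=
  M.verts ⊆ N.verts ∧ M.edges ≤ N.edges

/-- `M` is an embedding of `D` in `N`: a subgraph of `N` that is isomorphic to
`D` up to suppressing vertices of in-degree one and out-degree one, where the
isomorphism fixes the leaf labels and the root. -/
def IsEmbeddingOfComp (N D M : MDigraph V) (X : Finset V) (ρ : V) : Prop :=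
  IsSubgraph M N ∧ ∃ M₀, Relation.ReflTransGen SuppressStep M M₀ ∧
    IsoFixing M₀ D (insert ρ X)

/-- A collection `D_ρ = comp 0, D_1, …, D_k` of digraphs together with their
leaf sets. -/
structure PhyloDigraph (V : Type) where
  k : ℕ
  comp : Fin (k + 1) → MDigraph V
  leaves : Fin (k + 1) → Finset V

/-- `M` is an embedding of the collection `𝒟` in `N`: pairwise vertex-disjoint
embeddings of the components. -/
def IsFamEmbedding (N : MDigraph V) (X : Finset V) (ρ : V) (𝒟 : PhyloDigraph V)
    (M : Fin (𝒟.k + 1) → MDigraph V) : Prop :=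
  (∀ i, IsEmbeddingOfComp N (𝒟.comp i) (M i) X ρ) ∧
    ∀ i j, i ≠ j → Disjoint (M i).verts (M j).verts

/-- `𝒟` is a phylogenetic digraph of the network `N` on `X` with root `ρ`. -/
def IsPhyloDigraphOf (𝒟 : PhyloDigraph V) (N : MDigraph V) (X : Finset V) (ρ : V) : Prop :=
  (∀ i, IsLLAD (𝒟.comp i) (𝒟.leaves i) ρ) ∧
  (∀ i j, i ≠ j → Disjoint (𝒟.leaves i) (𝒟.leaves j)) ∧
  Finset.univ.biUnion 𝒟.leaves = X ∧
  ρ ∈ (𝒟.comp 0).verts ∧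
  (∀ i, i ≠ 0 → ρ ∉ (𝒟.comp i).verts) ∧
  (((𝒟.comp 0).verts = {ρ} ∧ (𝒟.comp 0).edges = 0) ∨
    ((𝒟.comp 0).inDeg ρ = 0 ∧ (𝒟.comp 0).outDeg ρ = 1)) ∧
  ∃ M, IsFamEmbedding N X ρ 𝒟 M

/-- `𝒟` is tree-child: each non-leaf vertex of `𝒟` has a child that is a leaf
or a tree vertex. -/
def IsTreeChildDigraph (𝒟 : PhyloDigraph V) : Prop :=
  ∀ i, IsTreeChildG (𝒟.comp i)

/-- Operation (E1): for a vertex `v` of `R` of in-degree zero in `R`, add an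
edge `(u, v)` of `N` provided `u` is not in `R`. -/
def E1Step (N : MDigraph V) {k : ℕ} (R R' : Fin (k + 1) → MDigraph V) : Prop :=
  ∃ i u v, (u, v) ∈ N.edges ∧ v ∈ (R i).verts ∧ (R i).inDeg v = 0 ∧
    (∀ j, u ∉ (R j).verts) ∧ R' = Function.update R i (addEdgeFrom (R i) u v)

/-- Operation (E2): for a vertex `v` of `R` that is a reticulation of `N` and
has in-degree one and out-degree one in `R`, add an edge `(u, v)` of `N`
provided `u` is not in `R`. -/
def E2Step (N : MDigraph V) {k : ℕ} (R R' : Fin (k + 1) → MDigraph V) : Prop :=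
  ∃ i u v, (u, v) ∈ N.edges ∧ v ∈ (R i).verts ∧ N.IsRetic v ∧
    (R i).inDeg v = 1 ∧ (R i).outDeg v = 1 ∧
    (∀ j, u ∉ (R j).verts) ∧ R' = Function.update R i (addEdgeFrom (R i) u v)

def ExtStep (N : MDigraph V) {k : ℕ} (R R' : Fin (k + 1) → MDigraph V) : Prop :=
  E1Step N R R' ∨ E2Step N R R'

/-- `R` is an extension obtained from `M` by applying (E1) and (E2) until no
further such operation is possible. -/
def IsExtensionFrom (N : MDigraph V) {k : ℕ} (M R : Fin (k + 1) → MDigraph V) : Prop :=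
  Relation.ReflTransGen (ExtStep N) M R ∧ ∀ R', ¬ ExtStep N R R'

/-- `R` is a root extension obtained from `M` by applying (E1) only, until (E1)
is no longer possible. -/
def IsRootExtensionFrom (N : MDigraph V) {k : ℕ} (M R : Fin (k + 1) → MDigraph V) : Prop :=
  Relation.ReflTransGen (E1Step N) M R ∧ ∀ R', ¬ E1Step N R R'

/-- `R` is an extension of `𝒟` in `N`. -/
def IsExtensionOf (N : MDigraph V) (X : Finset V) (ρ : V) (𝒟 : PhyloDigraph V)
    (R : Fin (𝒟.k + 1) → MDigraph V) : Prop :=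
  ∃ M, IsFamEmbedding N X ρ 𝒟 M ∧ IsExtensionFrom N M R

/-- `R` is a root extension of `𝒟` in `N`. -/
def IsRootExtensionOf (N : MDigraph V) (X : Finset V) (ρ : V) (𝒟 : PhyloDigraph V)
    (R : Fin (𝒟.k + 1) → MDigraph V) : Prop :=
  ∃ M, IsFamEmbedding N X ρ 𝒟 M ∧ IsRootExtensionFrom N M R

/-- All edges of a family of digraphs. -/
def famEdges {k : ℕ} (R : Fin (k + 1) → MDigraph V) : Multiset (V × V) :=
  ∑ i, (R i).edges

/-- All vertices of a family of digraphs. -/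
def famVerts {k : ℕ} (R : Fin (k + 1) → MDigraph V) : Finset V :=
  Finset.univ.biUnion fun i => (R i).verts

/-- `|E_N − E_R|`: the number of edges of `N` not contained in `R`. -/
def cutSize (N : MDigraph V) {k : ℕ} (R : Fin (k + 1) → MDigraph V) : ℕ :=
  (N.edges - famEdges R).card

/-- SNPR⁻: delete a reticulation edge `(u, v)` (with `u` a tree vertex) and
suppress `u` and `v`. -/
def SNPRminus (N N' : MDigraph V) : Prop :=
  ∃ u v N₂, N.IsTreeVert u ∧ N.IsRetic v ∧ (u, v) ∈ N.edges ∧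
    SuppressAt (deleteEdge N (u, v)) N₂ u ∧ SuppressAt N₂ N' v

/-- SNPR⁺: subdivide an edge `e` with `v'`, subdivide an edge `f` that is not a
descendant of `v'` with `u'`, and add the edge `(u', v')`. -/
def SNPRplus (N N' : MDigraph V) : Prop :=
  ∃ e f v' u' N₁ N₂, SubdivAt N N₁ e v' ∧ f ∈ N₁.edges ∧ ¬ N₁.Reach v' f.1 ∧
    SubdivAt N₁ N₂ f u' ∧ N'.verts = N₂.verts ∧ N'.edges = (u', v') ::ₘ N₂.edges

/-- SNPR±: delete a tree edge `(u, v)` with `u` a tree vertex, suppress `u`,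
subdivide an edge `f` that is not a descendant of `v` with a new vertex `u'`,
and add the edge `(u', v)`.  (Following the global assumption of the paper, the
deleted edge is a tree edge.) -/
def SNPRpm (N N' : MDigraph V) : Prop :=
  ∃ u v f u' N₂ N₃, N.IsTreeVert u ∧ (u, v) ∈ N.edges ∧ ¬ N.IsRetic v ∧
    SuppressAt (deleteEdge N (u, v)) N₂ u ∧
    f ∈ N₂.edges ∧ ¬ N₂.Reach v f.1 ∧ SubdivAt N₂ N₃ f u' ∧
    N'.verts = N₃.verts ∧ N'.edges = (u', v) ::ₘ N₃.edges

/-- SNPR⁺ up to isomorphism fixing `X ∪ {ρ}`. -/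
def SNPRplusI (X : Finset V) (ρ : V) (N N' : MDigraph V) : Prop :=
  ∃ N₀, SNPRplus N N₀ ∧ IsoFixing N₀ N' (insert ρ X)

/-- SNPR⁻ up to isomorphism fixing `X ∪ {ρ}`. -/
def SNPRminusI (X : Finset V) (ρ : V) (N N' : MDigraph V) : Prop :=
  ∃ N₀, SNPRminus N N₀ ∧ IsoFixing N₀ N' (insert ρ X)

/-- SNPR± up to isomorphism fixing `X ∪ {ρ}`. -/
def SNPRpmI (X : Finset V) (ρ : V) (N N' : MDigraph V) : Prop :=
  ∃ N₀, SNPRpm N N₀ ∧ IsoFixing N₀ N' (insert ρ X)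

/-- A single SNPR operation (up to isomorphism). -/
def SNPRI (X : Finset V) (ρ : V) (N N' : MDigraph V) : Prop :=
  SNPRplusI X ρ N N' ∨ SNPRminusI X ρ N N' ∨ SNPRpmI X ρ N N'

/-- A tree-child SNPR sequence of length `t`. -/
def IsTCSeq (X : Finset V) (ρ : V) (t : ℕ) (seq : ℕ → MDigraph V) : Prop :=
  (∀ i ≤ t, IsTCNetwork (seq i) X ρ) ∧ ∀ i < t, SNPRI X ρ (seq i) (seq (i + 1))

/-- Weight of one SNPR step: an SNPR± weighs two, an SNPR⁺ or SNPR⁻ weighs one. -/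
noncomputable def stepWeight (X : Finset V) (ρ : V) (G G' : MDigraph V) : ℕ :=
  haveI := Classical.propDecidable (SNPRpmI X ρ G G')
  if SNPRpmI X ρ G G' then 2 else 1

/-- Weight of an SNPR sequence. -/
noncomputable def seqWeight (X : Finset V) (ρ : V) (t : ℕ) (seq : ℕ → MDigraph V) : ℕ :=
  ∑ i ∈ Finset.range t, stepWeight X ρ (seq i) (seq (i + 1))

/-- The tree-child SNPR distance: the minimum weight of a tree-child SNPR
sequence connecting `N` and `N'`. -/
noncomputable def dtc (X : Finset V) (ρ : V) (N N' : MDigraph V) : ℕ :=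
  sInf { w | ∃ t seq, IsTCSeq X ρ t seq ∧ seq 0 = N ∧ seq t = N' ∧
    w = seqWeight X ρ t seq }

/-- `m_tc(N, N')`: the minimum of `c_𝒟 + c'_𝒟` over all agreement tree-child
digraphs `𝒟` for `N` and `N'`. -/
noncomputable def mtc (X : Finset V) (ρ : V) (N N' : MDigraph V) : ℕ :=
  sInf { m | ∃ (𝒟 : PhyloDigraph V) (R : Fin (𝒟.k + 1) → MDigraph V)
      (R' : Fin (𝒟.k + 1) → MDigraph V),
    IsPhyloDigraphOf 𝒟 N X ρ ∧ IsPhyloDigraphOf 𝒟 N' X ρ ∧ IsTreeChildDigraph 𝒟 ∧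
    IsExtensionOf N X ρ 𝒟 R ∧ IsExtensionOf N' X ρ 𝒟 R' ∧
    m = cutSize N R + cutSize N' R' }

/-- No reticulations: `G` is a tree. -/
def NoRetic (G : MDigraph V) : Prop := ∀ v, ¬ G.IsRetic v

/-- The rSPR distance between two phylogenetic `X`-trees: the minimum number of
rSPR operations (SNPR± operations applied to trees) transforming `T` into `T'`. -/
noncomputable def drspr (X : Finset V) (ρ : V) (T T' : MDigraph V) : ℕ :=
  sInf { t | ∃ seq : ℕ → MDigraph V,
    (∀ i ≤ t, IsPhyloNetwork (seq i) X ρ ∧ NoRetic (seq i)) ∧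
    (∀ i < t, SNPRpmI X ρ (seq i) (seq (i + 1))) ∧ seq 0 = T ∧ seq t = T' }

/-!
Deleting `(u, v)` and suppressing `u` and `v` replaces the paths `p → u → c` and `q → v → d`
of `N` by the edges `p → c` and `q → d`. Every other vertex keeps its degrees and its edges,
and every edge of `N'` is a path of `N`; so acyclicity, the root, the leaves and the degree
conditions carry over, and connectivity follows from acyclicity and the uniqueness of the root.
For the tree-child property, only `p` can lose its witness, namely `u`; its new child `c` is
the tree-child witness of `u` itself, because the other child `v` of `u` is a reticulation.
-/

namespace MDigraph

variable {G G' : MDigraph V} {a b x : V}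

theorem inDeg_ne_zero_iff : G.inDeg x ≠ 0 ↔ ∃ a, G.Adj a x := by
  simp [inDeg, Multiset.card_eq_zero, Multiset.eq_zero_iff_forall_notMem, Adj]

theorem outDeg_ne_zero_iff : G.outDeg x ≠ 0 ↔ ∃ b, G.Adj x b := by
  simp [outDeg, Multiset.card_eq_zero, Multiset.eq_zero_iff_forall_notMem, Adj]

theorem eq_of_adj_of_inDeg_eq_one (h : G.inDeg x = 1) (ha : G.Adj a x) (hb : G.Adj b x) :
    a = b := by
  obtain ⟨e, he⟩ := Multiset.card_eq_one.mp h
  have hmem : ∀ y, G.Adj y x → (y, x) = e := fun y hy =>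
    Multiset.mem_singleton.mp (by rw [← he]; exact Multiset.mem_filter.mpr ⟨hy, rfl⟩)
  simpa using (hmem a ha).trans (hmem b hb).symm

theorem eq_of_adj_of_outDeg_eq_one (h : G.outDeg x = 1) (ha : G.Adj x a) (hb : G.Adj x b) :
    a = b := by
  obtain ⟨e, he⟩ := Multiset.card_eq_one.mp h
  have hmem : ∀ y, G.Adj x y → (x, y) = e := fun y hy =>
    Multiset.mem_singleton.mp (by rw [← he]; exact Multiset.mem_filter.mpr ⟨hy, rfl⟩)
  simpa using (hmem a ha).trans (hmem b hb).symm

theorem IsRetic.ne_of_isTreeVert_or_isLeafV (hx : G.IsRetic x)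
    (ha : G.IsTreeVert a ∨ G.IsLeafV a) : a ≠ x := by
  rintro rfl
  rcases ha with ⟨-, hin, -⟩ | ⟨-, hout⟩ <;> simp_all [IsRetic]

omit [DecidableEq V] in
theorem Acyclic.ne_of_adj (h : G.Acyclic) (hab : G.Adj a b) : a ≠ b := by
  rintro rfl
  exact h a a hab .refl

omit [DecidableEq V] in
theorem Acyclic.not_transGen_self (h : G.Acyclic) (a : V) : ¬ TransGen G.Adj a a := by
  intro ha
  obtain ⟨b, hab, hba⟩ := TransGen.head'_iff.mp ha
  exact h a b hab hba

omit [DecidableEq V] in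
theorem Acyclic.of_adj_le_transGen (h : G.Acyclic) (hadj : G'.Adj ≤ TransGen G.Adj) :
    G'.Acyclic := fun a _ hab hba =>
  h.not_transGen_self a (TransGen.closed hadj a a (.head' hab hba))

omit [DecidableEq V] in
theorem Acyclic.wellFounded (h : G.Acyclic) :
    WellFounded fun a b : G.verts => G.Adj a.1 b.1 := by
  let parent : G.verts → G.verts → Prop := fun a b => G.Adj a.1 b.1
  have : Std.Irrefl (TransGen parent) :=
    ⟨fun a ha => h.not_transGen_self a (ha.lift Subtype.val fun _ _ => id)⟩
  exact Subrelation.wf (r := TransGen parent) (TransGen.single (r := parent))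
    (Finite.wellFounded_of_trans_of_irrefl _)

/-- Every vertex is linked to the unique source by following parents, which terminates by
acyclicity. -/
theorem Acyclic.connected {ρ : V} (h : G.Acyclic) (hwf : G.WellFormed)
    (hsrc : ∀ x ∈ G.verts, G.inDeg x = 0 → x = ρ) : G.Connected := by
  have hreach : ∀ x : G.verts, ReflTransGen G.UAdj x ρ := by
    intro x
    induction x using h.wellFounded.induction with
    | _ x ih =>
      by_cases hx : G.inDeg x = 0
      · rw [hsrc x x.2 hx]
      · obtain ⟨a, hax⟩ := inDeg_ne_zero_iff.mp hx
        exact .head (Or.inr hax) (ih ⟨a, (hwf _ hax).1⟩ hax)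
  have : Std.Symm G.UAdj := ⟨fun _ _ h => h.symm⟩
  exact fun a ha b hb => (hreach ⟨a, ha⟩).trans (symm (hreach ⟨b, hb⟩))

end MDigraph

open MDigraph

structure AgreesOff (G G' : MDigraph V) (S : Finset V) : Prop where
  inDeg_eq : ∀ x ∉ S, G'.inDeg x = G.inDeg x
  outDeg_eq : ∀ x ∉ S, G'.outDeg x = G.outDeg x
  adj_of_adj : ∀ a b, G.Adj a b → a ∉ S → b ∉ S → G'.Adj a b
  adj_le_transGen : G'.Adj ≤ TransGen G.Adj

namespace AgreesOff

variable {G₁ G₂ G₃ : MDigraph V} {S T : Finset V}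

theorem trans (h₁ : AgreesOff G₁ G₂ S) (h₂ : AgreesOff G₂ G₃ T) : AgreesOff G₁ G₃ (S ∪ T) where
  inDeg_eq x hx := by
    rw [Finset.mem_union, not_or] at hx
    rw [h₂.inDeg_eq x hx.2, h₁.inDeg_eq x hx.1]
  outDeg_eq x hx := by
    rw [Finset.mem_union, not_or] at hx
    rw [h₂.outDeg_eq x hx.2, h₁.outDeg_eq x hx.1]
  adj_of_adj a b hab ha hb := by
    rw [Finset.mem_union, not_or] at ha hb
    exact h₂.adj_of_adj a b (h₁.adj_of_adj a b hab ha.1 hb.1) ha.2 hb.2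
  adj_le_transGen a b hab := TransGen.closed h₁.adj_le_transGen a b (h₂.adj_le_transGen a b hab)

theorem mono (h : AgreesOff G₁ G₂ S) (hST : S ⊆ T) : AgreesOff G₁ G₂ T where
  inDeg_eq x hx := h.inDeg_eq x fun hS => hx (hST hS)
  outDeg_eq x hx := h.outDeg_eq x fun hS => hx (hST hS)
  adj_of_adj a b hab ha hb := h.adj_of_adj a b hab (fun hS => ha (hST hS)) fun hS => hb (hST hS)
  adj_le_transGen := h.adj_le_transGen

theorem isTreeVert_or_isLeafV (h : AgreesOff G₁ G₂ S) {x : V} (hx : x ∈ G₂.verts) (hxS : x ∉ S)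
    (hG₁ : G₁.IsTreeVert x ∨ G₁.IsLeafV x) : G₂.IsTreeVert x ∨ G₂.IsLeafV x := by
  rcases hG₁ with ⟨-, hin, hout⟩ | ⟨-, hout⟩
  · exact .inl ⟨hx, h.inDeg_eq x hxS ▸ hin, h.outDeg_eq x hxS ▸ hout⟩
  · exact .inr ⟨hx, h.outDeg_eq x hxS ▸ hout⟩

end AgreesOff

section DeleteEdge

variable {G : MDigraph V} {e : V × V}

theorem MDigraph.WellFormed.deleteEdge (h : G.WellFormed) : (deleteEdge G e).WellFormed :=
  fun f hf => h f (Multiset.mem_of_mem_erase hf)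

theorem MDigraph.Acyclic.deleteEdge (h : G.Acyclic) : (deleteEdge G e).Acyclic :=
  h.of_adj_le_transGen fun _ _ hab => .single (Multiset.mem_of_mem_erase hab)

theorem agreesOff_deleteEdge (he : e ∈ G.edges) : AgreesOff G (deleteEdge G e) {e.1, e.2} := by
  have hE : G.edges = e ::ₘ (deleteEdge G e).edges := (Multiset.cons_erase he).symm
  refine ⟨fun x hx => ?_, fun x hx => ?_, fun a b hab ha _ => ?_, fun a b hab => ?_⟩
  · simp only [Finset.mem_insert, Finset.mem_singleton, not_or] at hx
    simp [inDeg, hE, Ne.symm hx.2]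
  · simp only [Finset.mem_insert, Finset.mem_singleton, not_or] at hx
    simp [outDeg, hE, Ne.symm hx.1]
  · exact Multiset.mem_erase_of_ne (by rintro rfl; simp at ha) |>.mpr hab
  · exact .single (Multiset.mem_of_mem_erase hab)

end DeleteEdge

namespace SuppressAt

variable {G G' : MDigraph V} {w : V}

theorem verts_eq (h : SuppressAt G G' w) : G'.verts = G.verts.erase w := by
  obtain ⟨_, _, _, _, _, _, hV, _⟩ := h
  exact hV

theorem adj_of_adj {a b : V} (h : SuppressAt G G' w) (hab : G.Adj a b) (ha : a ≠ w)
    (hb : b ≠ w) : G'.Adj a b := by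
  obtain ⟨p, c, -, -, -, -, -, hE'⟩ := h
  rw [Adj, hE']
  refine Multiset.mem_cons_of_mem ((Multiset.mem_erase_of_ne ?_).mpr
    ((Multiset.mem_erase_of_ne ?_).mpr hab)) <;> simp [ha, hb]

theorem exists_edges_eq (h : SuppressAt G G' w) (hw : ¬ G.Adj w w) :
    ∃ p c R, p ≠ w ∧ c ≠ w ∧ G.edges = (p, w) ::ₘ (w, c) ::ₘ R ∧ G'.edges = (p, c) ::ₘ R ∧
      ∀ f ∈ R, f.1 ≠ w ∧ f.2 ≠ w := by
  obtain ⟨p, c, hp, hc, hin, hout, -, hE'⟩ := h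
  have hc' : (w, c) ∈ G.edges.erase (p, w) := by
    refine (Multiset.mem_erase_of_ne ?_).mpr hc
    rintro ⟨rfl, rfl⟩
    exact hw hp
  have hE : G.edges = (p, w) ::ₘ (w, c) ::ₘ (G.edges.erase (p, w)).erase (w, c) := by
    rw [Multiset.cons_erase hc', Multiset.cons_erase hp]
  generalize (G.edges.erase (p, w)).erase (w, c) = R at hE hE'
  have hout' : p ≠ w ∧ ∀ a b, (a, b) ∈ R → a ≠ w := by
    simpa [outDeg, hE, Multiset.filter_cons] using hout
  have hin' : c ≠ w ∧ ∀ a b, (a, b) ∈ R → b ≠ w := by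
    simpa [inDeg, hE, Multiset.filter_cons] using hin
  exact ⟨p, c, R, hout'.1, hin'.1, hE, hE', fun f hf => ⟨hout'.2 _ _ hf, hin'.2 _ _ hf⟩⟩

theorem agreesOff (h : SuppressAt G G' w) (hw : ¬ G.Adj w w) : AgreesOff G G' {w} := by
  obtain ⟨p, c, R, -, -, hE, hE', -⟩ := h.exists_edges_eq hw
  refine ⟨fun x hx => ?_, fun x hx => ?_, fun a b hab ha hb => ?_, fun a b hab => ?_⟩
  · rw [Finset.mem_singleton] at hx
    simp [inDeg, hE, hE', Multiset.filter_cons, Ne.symm hx, apply_ite Multiset.card]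
  · rw [Finset.mem_singleton] at hx
    simp [outDeg, hE, hE', Multiset.filter_cons, Ne.symm hx, apply_ite Multiset.card]
  · rw [Finset.mem_singleton] at ha hb
    exact h.adj_of_adj hab ha hb
  · have hpw : G.Adj p w := by simp [Adj, hE]
    have hwc : G.Adj w c := by simp [Adj, hE]
    rcases Multiset.mem_cons.mp (hE' ▸ hab : (a, b) ∈ (p, c) ::ₘ R) with hab | hab
    · obtain ⟨rfl, rfl⟩ := Prod.mk.inj hab
      exact .tail (.single hpw) hwc
    · exact .single (by simp [Adj, hE, hab])

theorem acyclic (h : SuppressAt G G' w) (hG : G.Acyclic) : G'.Acyclic :=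
  hG.of_adj_le_transGen (h.agreesOff (hG.ne_of_adj · rfl)).adj_le_transGen

theorem wellFormed (h : SuppressAt G G' w) (hwf : G.WellFormed) (hw : ¬ G.Adj w w) :
    G'.WellFormed := by
  obtain ⟨p, c, R, hp, hc, hE, hE', hR⟩ := h.exists_edges_eq hw
  intro f hf
  rw [hE', Multiset.mem_cons] at hf
  simp only [h.verts_eq, Finset.mem_erase]
  rcases hf with rfl | hf
  · exact ⟨⟨hp, (hwf (p, w) (by simp [hE])).1⟩, ⟨hc, (hwf (w, c) (by simp [hE])).2⟩⟩
  · have hfG := hwf f (by simp [hE, hf])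
    exact ⟨⟨(hR f hf).1, hfG.1⟩, ⟨(hR f hf).2, hfG.2⟩⟩

end SuppressAt

theorem IsPhyloNetwork.of_agreesOff {G G' : MDigraph V} {X S : Finset V} {ρ : V}
    (hG : IsPhyloNetwork G X ρ) (h : AgreesOff G G' S) (hverts : G'.verts = G.verts \ S)
    (hS : ∀ x ∈ S, G.inDeg x ≠ 0 ∧ G.outDeg x ≠ 0) (hwf : G'.WellFormed) :
    IsPhyloNetwork G' X ρ := by
  have hmem : ∀ x, x ∈ G'.verts ↔ x ∈ G.verts ∧ x ∉ S := by simp [hverts]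
  have hρS : ρ ∉ S := fun hρ => (hS ρ hρ).1 hG.root_inDeg
  have hXS : ∀ x ∈ X, x ∉ S := fun x hx hxS => (hS x hxS).2 ((hG.leaf_iff x (hG.X_sub hx)).2 hx)
  have hacyc : G'.Acyclic := hG.acyc.of_adj_le_transGen h.adj_le_transGen
  have hsrc : ∀ x ∈ G'.verts, G'.inDeg x = 0 → x = ρ := fun x hx hx0 => by
    obtain ⟨hxG, hxS⟩ := (hmem x).1 hx
    exact hG.root_unique x hxG (h.inDeg_eq x hxS ▸ hx0)
  refine ⟨hwf, hacyc.connected hwf hsrc, hacyc, hG.X_nonempty,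
    fun x hx => (hmem x).2 ⟨hG.X_sub hx, hXS x hx⟩, (hmem ρ).2 ⟨hG.root_mem, hρS⟩,
    h.inDeg_eq ρ hρS ▸ hG.root_inDeg, h.outDeg_eq ρ hρS ▸ hG.root_outDeg, hsrc,
    fun x hx => ?_, fun x hx => ?_, fun x hx => ?_⟩ <;>
  obtain ⟨hxG, hxS⟩ := (hmem x).1 hx <;>
  simp only [h.inDeg_eq x hxS, h.outDeg_eq x hxS]
  exacts [hG.leaf_iff x hxG, hG.leaf_inDeg x hxG, hG.internal x hxG]

section DeleteReticEdge

variable {N N₂ N' : MDigraph V} {u v : V}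

theorem verts_eq_of_suppressAt_deleteEdge (h₂ : SuppressAt (deleteEdge N (u, v)) N₂ u)
    (h₃ : SuppressAt N₂ N' v) : N'.verts = N.verts \ {u, v} := by
  ext x
  simp only [h₃.verts_eq, h₂.verts_eq, deleteEdge, Finset.mem_erase, Finset.mem_sdiff,
    Finset.mem_insert, Finset.mem_singleton]
  tauto

theorem agreesOff_of_suppressAt_deleteEdge (hac : N.Acyclic) (huv : N.Adj u v)
    (h₂ : SuppressAt (deleteEdge N (u, v)) N₂ u) (h₃ : SuppressAt N₂ N' v) :
    AgreesOff N N' {u, v} := by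
  have hac₂ : N₂.Acyclic := h₂.acyclic hac.deleteEdge
  refine (((agreesOff_deleteEdge huv).trans (h₂.agreesOff (hac.deleteEdge.ne_of_adj · rfl))).trans
    (h₃.agreesOff (hac₂.ne_of_adj · rfl))).mono ?_
  intro x
  simp only [Finset.mem_union, Finset.mem_insert, Finset.mem_singleton]
  tauto

theorem IsTreeChildG.of_suppressAt_deleteEdge (hTC : IsTreeChildG N) (hwf : N.WellFormed)
    (hac : N.Acyclic) (hv : N.IsRetic v) (huv : N.Adj u v)
    (h₂ : SuppressAt (deleteEdge N (u, v)) N₂ u) (h₃ : SuppressAt N₂ N' v) : IsTreeChildG N' := by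
  have hagree := agreesOff_of_suppressAt_deleteEdge hac huv h₂ h₃
  have hverts := verts_eq_of_suppressAt_deleteEdge h₂ h₃
  obtain ⟨p, c, hpu, huc, hinu, houtu, -, hE₂⟩ := h₂
  have hc : N.IsTreeVert c ∨ N.IsLeafV c := by
    obtain ⟨z, huz, hz⟩ := hTC u (hwf _ huv).1 (outDeg_ne_zero_iff.2 ⟨v, huv⟩)
    obtain rfl : c = z := eq_of_adj_of_outDeg_eq_one houtu huc
      ((Multiset.mem_erase_of_ne (by simp [hv.ne_of_isTreeVert_or_isLeafV hz])).mpr huz)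
    exact hz
  have hcv : c ≠ v := hv.ne_of_isTreeVert_or_isLeafV hc
  have hcu : c ≠ u := (hac.ne_of_adj (Multiset.mem_of_mem_erase huc)).symm
  intro w hw hw0
  simp only [hverts, Finset.mem_sdiff, Finset.mem_insert, Finset.mem_singleton, not_or] at hw
  obtain ⟨z, hwz, hz⟩ := hTC w hw.1 (hagree.outDeg_eq w (by simp [hw.2]) ▸ hw0)
  have hzv : z ≠ v := hv.ne_of_isTreeVert_or_isLeafV hz
  by_cases hzu : z = u
  · subst hzu
    obtain rfl : w = p := eq_of_adj_of_inDeg_eq_one hinu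
      ((Multiset.mem_erase_of_ne (by simp [hw.2.1])).mpr hwz) hpu
    refine ⟨c, h₃.adj_of_adj (by rw [Adj, hE₂]; exact Multiset.mem_cons_self _ _) hw.2.2 hcv,
      hagree.isTreeVert_or_isLeafV ?_ (by simp [hcu, hcv]) hc⟩
    simp [hverts, hcu, hcv, (hwf _ (Multiset.mem_of_mem_erase huc)).2]
  · refine ⟨z, hagree.adj_of_adj w z hwz (by simp [hw.2]) (by simp [hzu, hzv]),
      hagree.isTreeVert_or_isLeafV ?_ (by simp [hzu, hzv]) hz⟩
    simp [hverts, hzu, hzv, (hwf _ hwz).2]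

end DeleteReticEdge

/-- Deleting a reticulation edge `(u, v)` of a tree-child
network on `X` and suppressing `u` and `v` yields a tree-child network on `X`. -/
theorem treeChild_of_deleteReticEdge
    (N N₂ N' : MDigraph V) (X : Finset V) (ρ : V) (u v : V)
    (hN : IsTCNetwork N X ρ) (he : N.IsReticEdge (u, v))
    (h₂ : SuppressAt (deleteEdge N (u, v)) N₂ u) (h₃ : SuppressAt N₂ N' v) :
    IsTCNetwork N' X ρ := by
  obtain ⟨hPN, hTC⟩ := hN
  obtain ⟨huv, hv⟩ := he
  have hac₁ : (deleteEdge N (u, v)).Acyclic := hPN.acyc.deleteEdge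
  have hwf : N'.WellFormed :=
    h₃.wellFormed (h₂.wellFormed hPN.wf.deleteEdge (hac₁.ne_of_adj · rfl))
      ((h₂.acyclic hac₁).ne_of_adj · rfl)
  have hinternal : ∀ x ∈ ({u, v} : Finset V), N.inDeg x ≠ 0 ∧ N.outDeg x ≠ 0 := by
    obtain ⟨p, -, hpu, -⟩ := h₂
    simp only [Finset.mem_insert, Finset.mem_singleton, forall_eq_or_imp, forall_eq]
    exact ⟨⟨inDeg_ne_zero_iff.2 ⟨p, Multiset.mem_of_mem_erase hpu⟩, outDeg_ne_zero_iff.2 ⟨v, huv⟩⟩,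
      by simp [hv.2.1, hv.2.2]⟩
  exact ⟨hPN.of_agreesOff (agreesOff_of_suppressAt_deleteEdge hPN.acyc huv h₂ h₃)
      (verts_eq_of_suppressAt_deleteEdge h₂ h₃) hinternal hwf,
    hTC.of_suppressAt_deleteEdge hPN.wf hPN.acyc hv huv h₂ h₃⟩
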